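/- arXiv:2405.17649 — 5 statements merged into one kernel-verified Lean document; each statement's English description precedes it below -/
import Mathlib

section
/- For every nonempty partition λ, ε(λ) = Σ_{j ∈ supp(λ)} (j-1) · ε(λ - j). -/
noncomputable def epsQ (s : Multiset ℕ) : ℚ :=
  (Nat.factorial (Multiset.card s)) *
    ∏ j ∈ s.toFinset, ((j : ℚ) - 1) ^ (s.count j) / (Nat.factorial (s.count j))

lemma epsQ_key (s : Multiset ℕ) (j : ℕ) (hj : j ∈ s) :
    (Multiset.card s : ℚ) * (((j : ℚ) - 1) * epsQ (s.erase j)) = (s.count j : ℚ) * epsQ s := by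
  classical
  have hjf : j ∈ s.toFinset := Multiset.mem_toFinset.mpr hj
  have hm : 1 ≤ s.count j := Multiset.one_le_count_iff_mem.mpr hj
  have hn : 1 ≤ Multiset.card s := Multiset.card_pos.mpr (by rintro rfl; simp at hj)
  set m := s.count j with hm'
  set n := Multiset.card s with hn'
  have hcard : Multiset.card (s.erase j) = n - 1 := Multiset.card_erase_of_mem hj
  have hprod : (∏ k ∈ (s.erase j).toFinset,
        ((k : ℚ) - 1) ^ ((s.erase j).count k) / (Nat.factorial ((s.erase j).count k)))
      = ∏ k ∈ s.toFinset,
        ((k : ℚ) - 1) ^ ((s.erase j).count k) / (Nat.factorial ((s.erase j).count k)) := by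
    apply Finset.prod_subset
    · intro x hx
      rw [Multiset.mem_toFinset] at hx ⊢
      exact Multiset.mem_of_mem_erase hx
    · intro x _ hx'
      have : (s.erase j).count x = 0 := by
        rw [Multiset.count_eq_zero]
        simpa [Multiset.mem_toFinset] using hx'
      simp [this]
  have hsplit1 : (∏ k ∈ s.toFinset,
        ((k : ℚ) - 1) ^ ((s.erase j).count k) / (Nat.factorial ((s.erase j).count k)))
      = (((j : ℚ) - 1) ^ (m - 1) / (Nat.factorial (m - 1))) *
        ∏ k ∈ s.toFinset.erase j, ((k : ℚ) - 1) ^ (s.count k) / (Nat.factorial (s.count k)) := by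
    rw [← Finset.mul_prod_erase _ _ hjf]
    congr 1
    · rw [Multiset.count_erase_self]
    · apply Finset.prod_congr rfl
      intro k hk
      rw [Multiset.count_erase_of_ne (Finset.ne_of_mem_erase hk)]
  have hsplit2 : (∏ k ∈ s.toFinset,
        ((k : ℚ) - 1) ^ (s.count k) / (Nat.factorial (s.count k)))
      = (((j : ℚ) - 1) ^ m / (Nat.factorial m)) *
        ∏ k ∈ s.toFinset.erase j, ((k : ℚ) - 1) ^ (s.count k) / (Nat.factorial (s.count k)) := by
    rw [← Finset.mul_prod_erase _ _ hjf]
  have hfn : (Nat.factorial n : ℚ) = n * Nat.factorial (n - 1) := by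
    exact_mod_cast (Nat.mul_factorial_pred (Nat.pos_iff_ne_zero.mp hn)).symm
  have hfm : (Nat.factorial m : ℚ) = m * Nat.factorial (m - 1) := by
    exact_mod_cast (Nat.mul_factorial_pred (Nat.pos_iff_ne_zero.mp hm)).symm
  have hpow : ((j : ℚ) - 1) * ((j : ℚ) - 1) ^ (m - 1) = ((j : ℚ) - 1) ^ m := by
    rw [← pow_succ']
    congr 1
    omega
  unfold epsQ
  rw [hcard, hprod, hsplit1, hsplit2, hfn, hfm]
  have hfm1 : (Nat.factorial (m - 1) : ℚ) ≠ 0 := by positivity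
  field_simp
  rw [← hpow]
  ring

theorem epsQ_recurrence (s : Multiset ℕ) (hs : ∀ j ∈ s, 1 ≤ j) (hne : s ≠ 0) :
    epsQ s = ∑ j ∈ s.toFinset, ((j : ℚ) - 1) * epsQ (s.erase j) := by
  classical
  have hn : 0 < Multiset.card s := Multiset.card_pos.mpr hne
  have hcast : (Multiset.card s : ℚ) ≠ 0 := by positivity
  have := Finset.sum_congr rfl fun j hj =>
    epsQ_key s j (Multiset.mem_toFinset.mp hj)
  rw [← Finset.mul_sum] at this
  have hsum : ∑ j ∈ s.toFinset, (s.count j : ℚ) * epsQ s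
      = (Multiset.card s : ℚ) * epsQ s := by
    rw [← Finset.sum_mul]
    congr 1
    rw [← Nat.cast_sum]
    congr 1
    exact Multiset.toFinset_sum_count_eq s
  rw [hsum] at this
  exact (mul_left_cancel₀ hcast this).symm
end

section
/- For partitions λ and μ, ε(λ) · ε(μ) · binom(ℓ(λ∪μ), ℓ(λ)) = ε(λ∪μ) · ∏_{j ∈ supp(λ∪μ)} binom(m_j(λ∪μ), m_j(λ)), where λ∪μ is the partition formed by concatenating the parts of λ and μ and sorting in decreasing order. -/
theorem epsQ_union (s t : Multiset ℕ) (hs : ∀ j ∈ s, 1 ≤ j) (ht : ∀ j ∈ t, 1 ≤ j) :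
    epsQ s * epsQ t * (Nat.choose (Multiset.card (s + t)) (Multiset.card s) : ℚ) =
      epsQ (s + t) *
        ∏ j ∈ (s + t).toFinset, (Nat.choose ((s + t).count j) (s.count j) : ℚ) := by
  classical
  have extend : ∀ u : Multiset ℕ, u ≤ s + t →
      (∏ j ∈ u.toFinset, ((j : ℚ) - 1) ^ (u.count j) / (Nat.factorial (u.count j)))
        = ∏ j ∈ (s + t).toFinset, ((j : ℚ) - 1) ^ (u.count j) / (Nat.factorial (u.count j)) := by
    intro u hu
    apply Finset.prod_subset
    · intro j hj
      rw [Multiset.mem_toFinset] at *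
      exact Multiset.mem_of_le hu hj
    · intro j _ hj
      have : u.count j = 0 := by
        rw [Multiset.count_eq_zero]
        exact fun h => hj (Multiset.mem_toFinset.mpr h)
      simp [this]
  have hPs := extend s (Multiset.le_add_right s t)
  have hPt := extend t (Multiset.le_add_left t s)
  have key : ∀ j : ℕ,
      ((j : ℚ) - 1) ^ ((s + t).count j) / (Nat.factorial ((s + t).count j)) *
        (Nat.choose ((s + t).count j) (s.count j) : ℚ) =
      (((j : ℚ) - 1) ^ (s.count j) / (Nat.factorial (s.count j))) *
        (((j : ℚ) - 1) ^ (t.count j) / (Nat.factorial (t.count j))) := by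
    intro j
    have hc : (s + t).count j = s.count j + t.count j := Multiset.count_add j s t
    set a := s.count j
    set b := t.count j
    rw [hc, pow_add]
    have h1 : ((a + b).choose a * b.factorial * a.factorial : ℚ) = ((a + b).factorial : ℚ) := by
      have := Nat.add_choose_mul_factorial_mul_factorial b a
      rw [Nat.add_comm b a] at this
      exact_mod_cast this
    have ha : (a.factorial : ℚ) ≠ 0 := Nat.cast_ne_zero.mpr a.factorial_ne_zero
    have hb : (b.factorial : ℚ) ≠ 0 := Nat.cast_ne_zero.mpr b.factorial_ne_zero
    have hab : ((a + b).factorial : ℚ) ≠ 0 := Nat.cast_ne_zero.mpr (a + b).factorial_ne_zero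
    field_simp
    linear_combination ((j : ℚ) - 1) ^ a * ((j : ℚ) - 1) ^ b * h1
  have hsc : ((Multiset.card s).factorial * (Multiset.card t).factorial *
      (Nat.choose (Multiset.card (s + t)) (Multiset.card s)) : ℚ)
      = ((Multiset.card (s + t)).factorial : ℚ) := by
    rw [Multiset.card_add]
    have := Nat.add_choose_mul_factorial_mul_factorial (Multiset.card t) (Multiset.card s)
    rw [Nat.add_comm (Multiset.card t) (Multiset.card s)] at this
    push_cast [← this]
    ring
  unfold epsQ
  rw [hPs, hPt]
  calc ((Multiset.card s).factorial : ℚ) *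
        (∏ j ∈ (s + t).toFinset, ((j : ℚ) - 1) ^ (s.count j) / (Nat.factorial (s.count j))) *
        ((Multiset.card t).factorial *
          ∏ j ∈ (s + t).toFinset, ((j : ℚ) - 1) ^ (t.count j) / (Nat.factorial (t.count j))) *
        (Nat.choose (Multiset.card (s + t)) (Multiset.card s) : ℚ)
      = ((Multiset.card s).factorial * (Multiset.card t).factorial *
          (Nat.choose (Multiset.card (s + t)) (Multiset.card s)) : ℚ) *
        ∏ j ∈ (s + t).toFinset,
          ((((j : ℚ) - 1) ^ (s.count j) / (Nat.factorial (s.count j))) *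
            (((j : ℚ) - 1) ^ (t.count j) / (Nat.factorial (t.count j)))) := by
        rw [Finset.prod_mul_distrib]; ring
    _ = ((Multiset.card (s + t)).factorial : ℚ) *
        ∏ j ∈ (s + t).toFinset,
          (((j : ℚ) - 1) ^ ((s + t).count j) / (Nat.factorial ((s + t).count j)) *
            (Nat.choose ((s + t).count j) (s.count j) : ℚ)) := by
        rw [hsc]
        congr 1
        exact Finset.prod_congr rfl fun j _ => (key j).symm
    _ = _ := by rw [Finset.prod_mul_distrib]; ring
end

section
/- Let R be a commutative ring with elements e_1, e_2, .... Define p_0 = 1, p_1 = e_1, p_2 = 2e_2, and for n ≥ 3, p_n = n·e_n + Σ_{j=2}^{n-1} (j-1) e_j p_{n-j}. For n ≥ 1 set q_n = 2p_{n+1} - 2e_2 p_{n-1}. Then for all n ≥ 4, q_n = Σ_{j=2}^{n-2} (j-1) e_j q_{n-j} + 2(n+1)e_{n+1} + 2(n-1)e_n e_1 + 2(n-3)e_{n-1}e_2. -/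
theorem twin_path_leaf_recurrence {R : Type*} [CommRing R] (e : ℕ → R) (p : ℕ → R)
    (hp0 : p 0 = 1) (hp1 : p 1 = e 1) (hp2 : p 2 = 2 * e 2)
    (hp : ∀ n, 3 ≤ n → p n = (n : R) * e n +
      ∑ j ∈ Finset.Icc 2 (n - 1), ((j - 1 : ℕ) : R) * e j * p (n - j))
    (q : ℕ → R) (hq : ∀ n, 1 ≤ n → q n = 2 * p (n + 1) - 2 * e 2 * p (n - 1)) :
    ∀ n, 4 ≤ n → q n = (∑ j ∈ Finset.Icc 2 (n - 2), ((j - 1 : ℕ) : R) * e j * q (n - j)) +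
      2 * ((n + 1 : ℕ) : R) * e (n + 1) + 2 * ((n - 1 : ℕ) : R) * e n * e 1 +
      2 * ((n - 3 : ℕ) : R) * e (n - 1) * e 2 := by
  intro n hn
  obtain ⟨m, rfl⟩ : ∃ m, n = m + 4 := ⟨n - 4, by omega⟩
  have h1 : m + 4 - 2 = m + 2 := by omega
  have h2 : m + 4 - 1 = m + 3 := by omega
  have h3 : m + 4 - 3 = m + 1 := by omega
  have hq1 := hq (m + 4) (by omega)
  rw [h2] at hq1
  have hp5 := hp (m + 5) (by omega)
  rw [show m + 5 - 1 = m + 4 from by omega] at hp5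
  have hp3 := hp (m + 3) (by omega)
  rw [show m + 3 - 1 = m + 2 from by omega] at hp3
  have hs : (∑ j ∈ Finset.Icc 2 (m + 4 - 2), ((j - 1 : ℕ) : R) * e j * q (m + 4 - j))
      = 2 * (∑ j ∈ Finset.Icc 2 (m + 2), ((j - 1 : ℕ) : R) * e j * p (m + 5 - j))
        - 2 * e 2 * (∑ j ∈ Finset.Icc 2 (m + 2), ((j - 1 : ℕ) : R) * e j * p (m + 3 - j)) := by
    rw [h1, Finset.mul_sum, Finset.mul_sum, ← Finset.sum_sub_distrib]
    apply Finset.sum_congr rfl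
    intro j hj
    simp only [Finset.mem_Icc] at hj
    rw [hq (m + 4 - j) (by omega), show m + 4 - j + 1 = m + 5 - j from by omega,
      show m + 4 - j - 1 = m + 3 - j from by omega]
    ring
  have hsplit5 : (∑ j ∈ Finset.Icc 2 (m + 4), ((j - 1 : ℕ) : R) * e j * p (m + 5 - j))
      = (∑ j ∈ Finset.Icc 2 (m + 2), ((j - 1 : ℕ) : R) * e j * p (m + 5 - j))
        + ((m + 2 : ℕ) : R) * e (m + 3) * p 2 + ((m + 3 : ℕ) : R) * e (m + 4) * p 1 := by
    rw [show m + 4 = (m + 3) + 1 from rfl, Finset.sum_Icc_succ_top (by omega),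
      show m + 3 = (m + 2) + 1 from rfl, Finset.sum_Icc_succ_top (by omega),
      show m + 2 + 1 - 1 = m + 2 from by omega, show m + 3 + 1 - 1 = m + 3 from by omega,
      show m + 5 - (m + 2 + 1) = 2 from by omega, show m + 5 - (m + 3 + 1) = 1 from by omega]
  rw [hq1, hs, hp5, hp3, hsplit5, hp1, hp2]
  push_cast
  ring
end

section
/- Let R be a commutative ring with elements e_1, e_2, .... Define p_0 = 1, p_1 = e_1, p_2 = 2e_2, and for n ≥ 3, p_n = n·e_n + Σ_{j=2}^{n-1}(j-1)e_j p_{n-j}. For n ≥ 3 set r_n = p_{n+2} - 2e_2 p_n + e_2² p_{n-2} (so 4r_n models the path on n vertices twinned at both leaves). Then for all n ≥ 6, r_n = Σ_{j=2}^{n-3}(j-1)e_j r_{n-j} + (n+2)e_{n+2} + n e_{n+1} e_1 + 3(n-2)e_{n-1}e_3 + 2(n-3)e_{n-2}e_3 e_1 + 4(n-3)e_{n-2}e_4 - 2e_n e_2 - (n-4)e_{n-2}e_2² - (n-2)e_{n-1}e_2 e_1. -/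
theorem twin_path_both_leaves_recurrence {R : Type*} [CommRing R] (e : ℕ → R) (p : ℕ → R)
    (hp0 : p 0 = 1) (hp1 : p 1 = e 1) (hp2 : p 2 = 2 * e 2)
    (hp : ∀ n, 3 ≤ n → p n = (n : R) * e n +
      ∑ j ∈ Finset.Icc 2 (n - 1), ((j - 1 : ℕ) : R) * e j * p (n - j))
    (r : ℕ → R)
    (hr : ∀ n, 3 ≤ n → r n = p (n + 2) - 2 * e 2 * p n + e 2 ^ 2 * p (n - 2)) :
    ∀ n, 6 ≤ n → r n = (∑ j ∈ Finset.Icc 2 (n - 3), ((j - 1 : ℕ) : R) * e j * r (n - j)) +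
      ((n + 2 : ℕ) : R) * e (n + 2) + (n : R) * e (n + 1) * e 1 +
      3 * ((n - 2 : ℕ) : R) * e (n - 1) * e 3 +
      2 * ((n - 3 : ℕ) : R) * e (n - 2) * e 3 * e 1 +
      4 * ((n - 3 : ℕ) : R) * e (n - 2) * e 4 -
      2 * e n * e 2 - ((n - 4 : ℕ) : R) * e (n - 2) * e 2 ^ 2 -
      ((n - 2 : ℕ) : R) * e (n - 1) * e 2 * e 1 := by
  intro n hn
  obtain ⟨m, rfl⟩ : ∃ m, n = m + 6 := ⟨n - 6, by omega⟩
  have hp3 : p 3 = 3 * e 3 + e 2 * e 1 := by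
    rw [hp 3 (by norm_num)]
    norm_num [Finset.Icc_self, hp1]
  have hp4 : p 4 = 4 * e 4 + 2 * e 2 ^ 2 + 2 * e 3 * e 1 := by
    rw [hp 4 (by norm_num)]
    rw [show (4:ℕ) - 1 = 2 + 1 from rfl, Finset.sum_Icc_succ_top (by omega)]
    norm_num [Finset.Icc_self, hp1, hp2]
    ring
  have hsum : ∑ j ∈ Finset.Icc 2 (m+6-3), ((j - 1 : ℕ) : R) * e j * r (m+6-j)
      = (∑ j ∈ Finset.Icc 2 (m+3), ((j - 1 : ℕ) : R) * e j * p (m+8-j))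
        - 2 * e 2 * (∑ j ∈ Finset.Icc 2 (m+3), ((j - 1 : ℕ) : R) * e j * p (m+6-j))
        + e 2 ^ 2 * (∑ j ∈ Finset.Icc 2 (m+3), ((j - 1 : ℕ) : R) * e j * p (m+4-j)) := by
    rw [Finset.mul_sum, Finset.mul_sum, ← Finset.sum_sub_distrib, ← Finset.sum_add_distrib]
    apply Finset.sum_congr (by congr 1)
    intro j hj
    simp only [Finset.mem_Icc] at hj
    rw [hr (m+6-j) (by omega), show m+6-j+2 = m+8-j by omega, show m+6-j-2 = m+4-j by omega]
    ring
  have split8 : ∀ f : ℕ → R, ∑ j ∈ Finset.Icc 2 (m+7), f j = (∑ j ∈ Finset.Icc 2 (m+3), f j)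
      + f (m+4) + f (m+5) + f (m+6) + f (m+7) := by
    intro f
    rw [show m+7 = (m+6)+1 by ring, Finset.sum_Icc_succ_top (by omega),
        show m+6 = (m+5)+1 by ring, Finset.sum_Icc_succ_top (by omega),
        show m+5 = (m+4)+1 by ring, Finset.sum_Icc_succ_top (by omega),
        show m+4 = (m+3)+1 by ring, Finset.sum_Icc_succ_top (by omega)]
  have split5 : ∀ f : ℕ → R, ∑ j ∈ Finset.Icc 2 (m+5), f j = (∑ j ∈ Finset.Icc 2 (m+3), f j)
      + f (m+4) + f (m+5) := by
    intro f
    rw [show m+5 = (m+4)+1 by ring, Finset.sum_Icc_succ_top (by omega),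
        show m+4 = (m+3)+1 by ring, Finset.sum_Icc_succ_top (by omega)]
  have hP8 : p (m+8) = ((m+8:ℕ):R) * e (m+8)
      + (∑ j ∈ Finset.Icc 2 (m+3), ((j - 1 : ℕ) : R) * e j * p (m+8-j))
      + ((m+3:ℕ):R) * e (m+4) * p 4 + ((m+4:ℕ):R) * e (m+5) * p 3
      + ((m+5:ℕ):R) * e (m+6) * p 2 + ((m+6:ℕ):R) * e (m+7) * p 1 := by
    rw [hp (m+8) (by omega), show m+8-1 = m+7 by omega, split8]
    rw [show m+8-(m+4) = 4 by omega, show m+8-(m+5) = 3 by omega,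
        show m+8-(m+6) = 2 by omega, show m+8-(m+7) = 1 by omega,
        show m+4-1 = m+3 by omega, show m+5-1 = m+4 by omega,
        show m+6-1 = m+5 by omega, show m+7-1 = m+6 by omega]
    ring
  have hP6 : p (m+6) = ((m+6:ℕ):R) * e (m+6)
      + (∑ j ∈ Finset.Icc 2 (m+3), ((j - 1 : ℕ) : R) * e j * p (m+6-j))
      + ((m+3:ℕ):R) * e (m+4) * p 2 + ((m+4:ℕ):R) * e (m+5) * p 1 := by
    rw [hp (m+6) (by omega), show m+6-1 = m+5 by omega, split5]
    rw [show m+6-(m+4) = 2 by omega, show m+6-(m+5) = 1 by omega,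
        show m+4-1 = m+3 by omega, show m+5-1 = m+4 by omega]
    ring
  have hP4 : p (m+4) = ((m+4:ℕ):R) * e (m+4)
      + (∑ j ∈ Finset.Icc 2 (m+3), ((j - 1 : ℕ) : R) * e j * p (m+4-j)) := by
    rw [hp (m+4) (by omega), show m+4-1 = m+3 by omega]
  rw [hr (m+6) (by omega), show m+6+2 = m+8 by omega, show m+6-2 = m+4 by omega,
      hsum, hP8, hP6, hP4, hp1, hp2, hp3, hp4]
  rw [show m+6-4 = m+2 by omega, show m+6-1 = m+5 by omega, show m+6+1 = m+7 by omega]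
  push_cast
  ring
end

section
/- Let R be a commutative ring with elements e_1, e_2, ..., p_n the path sequence (p_0 = 1, p_1 = e_1, p_2 = 2e_2, p_n = n·e_n + Σ_{j=2}^{n-1}(j-1)e_j p_{n-j} for n ≥ 3), and for n ≥ 2, ℓ ≥ 2 define x_{n,ℓ} = -2p_{ℓ-1}p_{n-ℓ+2} + 2e_1 p_n + 4p_{n+1} - 2p_ℓ p_{n-ℓ+1} + 2e_2 p_{ℓ-1}p_{n-ℓ} - 2p_{ℓ+1}p_{n-ℓ}. Then for fixed ℓ ≥ 2 and all n ≥ max(ℓ+4, 4), x_{n,ℓ} = Σ_{j=2}^{n-ℓ-1}(j-1)e_j x_{n-j,ℓ} + 4(n+1)e_{n+1} + 2n e_1 e_n + 2e_1 Σ_{j=n-ℓ+2}^{n-1}(j-1)e_j p_{n-j} + 4 Σ_{j=n-ℓ+3}^{n}(j-1)e_j p_{n+1-j} + 2 Σ_{j=n-ℓ+1}^{n-ℓ+2}(j-2)e_j p_{n+1-j} + (n-ℓ-2)e_{n-ℓ}·(2p_{ℓ+1} - 2e_2 p_{ℓ-1}). -/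
theorem twin_path_interior_recurrence {R : Type*} [CommRing R] (e : ℕ → R) (p : ℕ → R)
    (hp0 : p 0 = 1) (hp1 : p 1 = e 1) (hp2 : p 2 = 2 * e 2)
    (hp : ∀ n, 3 ≤ n → p n = (n : R) * e n +
      ∑ j ∈ Finset.Icc 2 (n - 1), ((j - 1 : ℕ) : R) * e j * p (n - j))
    (x : ℕ → ℕ → R)
    (hx : ∀ n l, 2 ≤ n → 2 ≤ l →
      x n l = -2 * p (l - 1) * p (n - l + 2) + 2 * e 1 * p n + 4 * p (n + 1) -
        2 * p l * p (n - l + 1) + 2 * e 2 * p (l - 1) * p (n - l) -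
        2 * p (l + 1) * p (n - l)) :
    ∀ l, 2 ≤ l → ∀ n, max (l + 4) 4 ≤ n →
      x n l = (∑ j ∈ Finset.Icc 2 (n - l - 1), ((j - 1 : ℕ) : R) * e j * x (n - j) l) +
        4 * ((n + 1 : ℕ) : R) * e (n + 1) + 2 * (n : R) * e 1 * e n +
        2 * e 1 * (∑ j ∈ Finset.Icc (n - l + 2) (n - 1), ((j - 1 : ℕ) : R) * e j * p (n - j)) +
        4 * (∑ j ∈ Finset.Icc (n - l + 3) n, ((j - 1 : ℕ) : R) * e j * p (n + 1 - j)) +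
        2 * (∑ j ∈ Finset.Icc (n - l + 1) (n - l + 2), ((j - 2 : ℕ) : R) * e j * p (n + 1 - j)) +
        ((n - l - 2 : ℕ) : R) * e (n - l) * (2 * p (l + 1) - 2 * e 2 * p (l - 1)) := by
  intro l hl n hn
  obtain ⟨a, rfl⟩ : ∃ a, l = a + 2 := ⟨l - 2, by omega⟩
  obtain ⟨b, rfl⟩ : ∃ b, n = a + b + 6 := ⟨n - a - 6, by omega⟩
  -- the fundamental recurrence in subtracted form
  have key : ∀ M : ℕ, 3 ≤ M →
      (∑ j ∈ Finset.Icc 2 (M - 1), ((j - 1 : ℕ) : R) * e j * p (M - j))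
        = p M - (M : R) * e M := by
    intro M hM
    rw [hp M hM]; ring
  -- generic splitting lemmas
  have peel : ∀ (K : ℕ) (f : ℕ → R), 2 ≤ K + 1 →
      (∑ j ∈ Finset.Icc 2 (K + 1), f j) = (∑ j ∈ Finset.Icc 2 K, f j) + f (K + 1) :=
    fun K f h => Finset.sum_Icc_succ_top h f
  have icc_split : ∀ (L K : ℕ) (f : ℕ → R), 1 ≤ L → L ≤ K →
      (∑ j ∈ Finset.Icc 2 K, f j) = (∑ j ∈ Finset.Icc 2 L, f j) + ∑ j ∈ Finset.Icc (L + 1) K, f j := by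
    intro L K f h1 h2
    rw [show (2:ℕ) = 1 + 1 from rfl, Finset.Icc_add_one_left_eq_Ioc, Finset.Icc_add_one_left_eq_Ioc, Finset.Icc_add_one_left_eq_Ioc,
        ← Finset.sum_Ioc_consecutive f h1 h2]
  -- closed forms of the five partial sums
  have hE : (∑ j ∈ Finset.Icc 2 (b+3), ((j-1:ℕ):R) * e j * p (b+4-j))
      = p (b+4) - ((b+4:ℕ):R) * e (b+4) := by
    have h := key (b+4) (by omega)
    rwa [show b+4-1 = b+3 by omega] at h
  have hD : (∑ j ∈ Finset.Icc 2 (b+3), ((j-1:ℕ):R) * e j * p (b+5-j))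
      = p (b+5) - ((b+5:ℕ):R) * e (b+5) - ((b+3:ℕ):R) * e (b+4) * p 1 := by
    have h := key (b+5) (by omega)
    rw [show b+5-1 = b+3+1 by omega, peel (b+3) _ (by omega)] at h
    rw [show b+3+1 = b+4 by omega, show b+4-1 = b+3 by omega, show b+5-(b+4) = 1 by omega] at h
    linear_combination h
  have hA : (∑ j ∈ Finset.Icc 2 (b+3), ((j-1:ℕ):R) * e j * p (b+6-j))
      = p (b+6) - ((b+6:ℕ):R) * e (b+6) - ((b+4:ℕ):R) * e (b+5) * p 1
        - ((b+3:ℕ):R) * e (b+4) * p 2 := by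
    have h := key (b+6) (by omega)
    rw [show b+6-1 = b+4+1 by omega, peel (b+4) _ (by omega),
        show b+4 = b+3+1 by omega, peel (b+3) _ (by omega)] at h
    rw [show b+3+1 = b+4 by omega, show b+4+1 = b+5 by omega, show b+4-1 = b+3 by omega,
        show b+5-1 = b+4 by omega, show b+6-(b+4) = 2 by omega, show b+6-(b+5) = 1 by omega] at h
    linear_combination h
  have hB : (∑ j ∈ Finset.Icc 2 (b+3), ((j-1:ℕ):R) * e j * p (a+b+6-j))
      = p (a+b+6) - ((a+b+6:ℕ):R) * e (a+b+6)
        - ((b+3:ℕ):R) * e (b+4) * p (a+2) - ((b+4:ℕ):R) * e (b+5) * p (a+1)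
        - (∑ j ∈ Finset.Icc (b+6) (a+b+5), ((j-1:ℕ):R) * e j * p (a+b+6-j)) := by
    have h := key (a+b+6) (by omega)
    rw [show a+b+6-1 = a+b+5 by omega,
        icc_split (b+5) (a+b+5) _ (by omega) (by omega),
        show b+5 = b+4+1 by omega, peel (b+4) _ (by omega),
        show b+4 = b+3+1 by omega, peel (b+3) _ (by omega)] at h
    rw [show b+3+1 = b+4 by omega, show b+4+1 = b+5 by omega, show b+5+1 = b+6 by omega,
        show b+4-1 = b+3 by omega, show b+5-1 = b+4 by omega,
        show a+b+6-(b+4) = a+2 by omega, show a+b+6-(b+5) = a+1 by omega] at h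
    linear_combination h
  have hC : (∑ j ∈ Finset.Icc 2 (b+3), ((j-1:ℕ):R) * e j * p (a+b+7-j))
      = p (a+b+7) - ((a+b+7:ℕ):R) * e (a+b+7)
        - ((b+3:ℕ):R) * e (b+4) * p (a+3) - ((b+4:ℕ):R) * e (b+5) * p (a+2)
        - ((b+5:ℕ):R) * e (b+6) * p (a+1)
        - (∑ j ∈ Finset.Icc (b+7) (a+b+6), ((j-1:ℕ):R) * e j * p (a+b+7-j)) := by
    have h := key (a+b+7) (by omega)
    rw [show a+b+7-1 = a+b+6 by omega,
        icc_split (b+6) (a+b+6) _ (by omega) (by omega),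
        show b+6 = b+5+1 by omega, peel (b+5) _ (by omega),
        show b+5 = b+4+1 by omega, peel (b+4) _ (by omega),
        show b+4 = b+3+1 by omega, peel (b+3) _ (by omega)] at h
    rw [show b+3+1 = b+4 by omega, show b+4+1 = b+5 by omega, show b+5+1 = b+6 by omega,
        show b+6+1 = b+7 by omega,
        show b+4-1 = b+3 by omega, show b+5-1 = b+4 by omega, show b+6-1 = b+5 by omega,
        show a+b+7-(b+4) = a+3 by omega, show a+b+7-(b+5) = a+2 by omega,
        show a+b+7-(b+6) = a+1 by omega] at h
    linear_combination h
  -- the two-term sum on the right-hand side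
  have hmini : (∑ j ∈ Finset.Icc (b+5) (b+6), ((j-2:ℕ):R) * e j * p (a+b+7-j))
      = ((b+3:ℕ):R) * e (b+5) * p (a+2) + ((b+4:ℕ):R) * e (b+6) * p (a+1) := by
    rw [show b+6 = b+5+1 by omega, Finset.sum_Icc_succ_top (by omega : b+5 ≤ b+5+1),
        Finset.Icc_self, Finset.sum_singleton]
    rw [show b+5+1 = b+6 by omega, show b+5-2 = b+3 by omega, show b+6-2 = b+4 by omega,
        show a+b+7-(b+5) = a+2 by omega, show a+b+7-(b+6) = a+1 by omega]
  -- split the sum of x's into six p-sums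
  have hS : (∑ j ∈ Finset.Icc 2 (b+3), ((j-1:ℕ):R) * e j * x (a+b+6-j) (a+2))
      = -2 * p (a+1) * (∑ j ∈ Finset.Icc 2 (b+3), ((j-1:ℕ):R) * e j * p (b+6-j))
      + 2 * e 1 * (∑ j ∈ Finset.Icc 2 (b+3), ((j-1:ℕ):R) * e j * p (a+b+6-j))
      + 4 * (∑ j ∈ Finset.Icc 2 (b+3), ((j-1:ℕ):R) * e j * p (a+b+7-j))
      - 2 * p (a+2) * (∑ j ∈ Finset.Icc 2 (b+3), ((j-1:ℕ):R) * e j * p (b+5-j))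
      + (2 * e 2 * p (a+1) - 2 * p (a+3)) *
          (∑ j ∈ Finset.Icc 2 (b+3), ((j-1:ℕ):R) * e j * p (b+4-j)) := by
    simp only [Finset.mul_sum]
    rw [← Finset.sum_add_distrib, ← Finset.sum_add_distrib, ← Finset.sum_sub_distrib,
        ← Finset.sum_add_distrib]
    refine Finset.sum_congr rfl fun j hj => ?_
    simp only [Finset.mem_Icc] at hj
    rw [hx (a+b+6-j) (a+2) (by omega) (by omega)]
    rw [show a+2-1 = a+1 by omega, show a+b+6-j-(a+2)+2 = b+6-j by omega,
        show a+b+6-j+1 = a+b+7-j by omega, show a+b+6-j-(a+2)+1 = b+5-j by omega,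
        show a+b+6-j-(a+2) = b+4-j by omega, show a+2+1 = a+3 by omega]
    ring
  -- now assemble
  rw [hx (a+b+6) (a+2) (by omega) (by omega)]
  rw [show a+b+6-(a+2)-1 = b+3 by omega, show a+b+6+1 = a+b+7 by omega,
      show a+b+6-(a+2)+2 = b+6 by omega, show a+b+6-1 = a+b+5 by omega,
      show a+b+6-(a+2)+3 = b+7 by omega, show a+b+6-(a+2)+1 = b+5 by omega,
      show a+b+6-(a+2)-2 = b+2 by omega, show a+b+6-(a+2) = b+4 by omega,
      show a+2-1 = a+1 by omega, show a+2+1 = a+3 by omega]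
  rw [hS, hA, hB, hC, hD, hE, hmini, hp1, hp2]
  push_cast
  ring
end
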